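/- Let Z ∈ {0,1}^{n×r} be a membership matrix for the partition, let ν ∈ ℝ^{r×r} be such that U = Zν has orthonormal columns (UᵀU = I_r), let O be any r×r orthogonal matrix, and let Û ∈ ℝ^{n×r} be arbitrary. Let C ∈ ℝ^{n×r}, with rows c_i, minimize ‖Û − M‖_F² over all matrices M with at most r distinct rows. Then the set M = {i : ‖c_i − Z_iνO‖ ≥ 1/√(2 m_max)} satisfies |M| ≤ 8 m_max ‖Û − UO‖_F². -/
import Mathlib


open Matrix
open scoped Classical

noncomputable section

/-- The size `m_k` of cluster `C_k = {i : z i = k}` of the partition given by `z`. -/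
def clusterSize {n r : ℕ} (z : Fin n → Fin r) (k : Fin r) : ℕ :=
  (Finset.univ.filter fun i => z i = k).card

/-- The largest cluster size `m_max`. -/
def mMax {n r : ℕ} [NeZero r] (z : Fin n → Fin r) : ℕ :=
  Finset.univ.sup' Finset.univ_nonempty (clusterSize z)

/-- Squared Frobenius norm `‖A‖_F²`. -/
def frobSq {m k : ℕ} (A : Matrix (Fin m) (Fin k) ℝ) : ℝ := ∑ i, ∑ j, (A i j) ^ 2

/-- The 0/1 membership matrix `Z` with `Z_{ik} = 1` iff `i ∈ C_k`. -/
def Zmat {n r : ℕ} (z : Fin n → Fin r) : Matrix (Fin n) (Fin r) ℝ :=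
  Matrix.of fun i k => if z i = k then 1 else 0

/-- `C` has at most `r` distinct rows. -/
def HasAtMostRows {n r : ℕ} (C : Matrix (Fin n) (Fin r) ℝ) : Prop :=
  ∃ (g : Fin n → Fin r) (rows : Fin r → Fin r → ℝ), ∀ i, C i = rows (g i)

lemma Zmat_mul_apply {n r : ℕ} (z : Fin n → Fin r) (A : Matrix (Fin r) (Fin r) ℝ)
    (i : Fin n) (j : Fin r) : (Zmat z * A) i j = A (z i) j := by
  simp [Matrix.mul_apply, Zmat, ite_mul]

/-- Let `U = Zν` have orthonormal columns, `O` an `r × r` orthogonal matrix,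
`Û` arbitrary, and let `C` minimize the k-means objective `‖Û − M‖_F²` over matrices with at
most `r` distinct rows.  Then the set `M = {i : ‖c_i − Z_iνO‖ ≥ 1/√(2 m_max)}` satisfies
`|M| ≤ 8 m_max ‖Û − UO‖_F²`. -/
theorem kmeans_miscluster_bound {n r : ℕ} [NeZero r] (z : Fin n → Fin r)
    (hz : Function.Surjective z)
    (ν : Matrix (Fin r) (Fin r) ℝ)
    (hUorth : (Zmat z * ν)ᵀ * (Zmat z * ν) = 1)
    (O : Matrix (Fin r) (Fin r) ℝ) (hO : Oᵀ * O = 1)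
    (Uhat : Matrix (Fin n) (Fin r) ℝ)
    (C : Matrix (Fin n) (Fin r) ℝ) (hCrows : HasAtMostRows C)
    (hCopt : ∀ M : Matrix (Fin n) (Fin r) ℝ, HasAtMostRows M →
      frobSq (Uhat - C) ≤ frobSq (Uhat - M)) :
    ((Finset.univ.filter fun i : Fin n =>
        1 / Real.sqrt (2 * (mMax z : ℝ)) ≤
          Real.sqrt (∑ k, (C i k - (ν * O) (z i) k) ^ 2)).card : ℝ) ≤
      8 * (mMax z : ℝ) * frobSq (Uhat - Zmat z * ν * O) := by
  set m : ℝ := (mMax z : ℝ) with hmdef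
  set W : Matrix (Fin n) (Fin r) ℝ := Zmat z * ν * O with hWdef
  have hW : ∀ i k, W i k = (ν * O) (z i) k := by
    intro i k
    rw [hWdef, Matrix.mul_assoc]
    exact Zmat_mul_apply z (ν * O) i k
  -- m ≥ 1
  have hm1 : (1 : ℝ) ≤ m := by
    have hr : 0 < r := Nat.pos_of_ne_zero (NeZero.ne r)
    set k : Fin r := ⟨0, hr⟩
    obtain ⟨i, hi⟩ := hz k
    have h1 : 1 ≤ clusterSize z k := by
      refine Finset.card_pos.mpr ⟨i, ?_⟩
      simp [clusterSize, hi]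
    have h2 : clusterSize z k ≤ mMax z := Finset.le_sup' _ (Finset.mem_univ k)
    rw [hmdef]; exact_mod_cast le_trans h1 h2
  have h2m : (0 : ℝ) < 2 * m := by linarith
  -- W has at most r distinct rows
  have hrows : HasAtMostRows W := by
    refine ⟨z, fun j => (ν * O) j, fun i => funext fun k => hW i k⟩
  have hC : frobSq (Uhat - C) ≤ frobSq (Uhat - W) := hCopt W hrows
  set D : ℝ := frobSq (Uhat - W) with hDdef
  have hDnn : 0 ≤ D := Finset.sum_nonneg fun i _ => Finset.sum_nonneg fun k _ => sq_nonneg _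
  -- key quadratic triangle inequality
  have key : frobSq (C - W) ≤ 2 * frobSq (Uhat - C) + 2 * D := by
    rw [hDdef]
    unfold frobSq
    rw [Finset.mul_sum, Finset.mul_sum, ← Finset.sum_add_distrib]
    refine Finset.sum_le_sum fun i _ => ?_
    rw [Finset.mul_sum, Finset.mul_sum, ← Finset.sum_add_distrib]
    refine Finset.sum_le_sum fun k _ => ?_
    simp only [Matrix.sub_apply]
    nlinarith [sq_nonneg ((Uhat i k - C i k) + (Uhat i k - W i k)), sq_nonneg (C i k - W i k)]
  have hfin : frobSq (C - W) ≤ 4 * D := by linarith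
  set Mset := Finset.univ.filter fun i : Fin n =>
      1 / Real.sqrt (2 * m) ≤ Real.sqrt (∑ k, (C i k - (ν * O) (z i) k) ^ 2) with hMset
  have hS : ∀ i ∈ Mset, 1 / (2 * m) ≤ ∑ k, (C i k - (ν * O) (z i) k) ^ 2 := by
    intro i hi
    have hi' := (Finset.mem_filter.mp hi).2
    have hSnn : 0 ≤ ∑ k, (C i k - (ν * O) (z i) k) ^ 2 :=
      Finset.sum_nonneg fun _ _ => sq_nonneg _
    calc 1 / (2 * m) = (1 / Real.sqrt (2 * m)) ^ 2 := by
          rw [div_pow, one_pow, Real.sq_sqrt h2m.le]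
      _ ≤ (Real.sqrt (∑ k, (C i k - (ν * O) (z i) k) ^ 2)) ^ 2 :=
          pow_le_pow_left₀ (by positivity) hi' 2
      _ = ∑ k, (C i k - (ν * O) (z i) k) ^ 2 := Real.sq_sqrt hSnn
  have hcard : (Mset.card : ℝ) * (1 / (2 * m)) ≤ frobSq (C - W) := by
    calc (Mset.card : ℝ) * (1 / (2 * m)) = ∑ _i ∈ Mset, 1 / (2 * m) := by
          rw [Finset.sum_const, nsmul_eq_mul]
      _ ≤ ∑ i ∈ Mset, ∑ k, (C i k - (ν * O) (z i) k) ^ 2 := Finset.sum_le_sum hS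
      _ ≤ ∑ i, ∑ k, (C i k - (ν * O) (z i) k) ^ 2 :=
          Finset.sum_le_sum_of_subset_of_nonneg (Finset.filter_subset _ _)
            (fun i _ _ => Finset.sum_nonneg fun _ _ => sq_nonneg _)
      _ = frobSq (C - W) := by
          unfold frobSq
          refine Finset.sum_congr rfl fun i _ => Finset.sum_congr rfl fun k _ => ?_
          rw [Matrix.sub_apply, hW i k]
  rw [mul_one_div, div_le_iff₀ h2m] at hcard
  have := mul_le_mul_of_nonneg_right hfin h2m.le
  show (Mset.card : ℝ) ≤ 8 * m * D
  nlinarith [hcard, this]
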